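/- For any partition λ of n, Σ_{u∈λ} h(u) − Σ_{u∈λ} |c(u)| − n equals the number of pairs (u, v) of cells of λ such that v ∈ H(u) and u, v do not lie in the same diagonal hook; in particular this quantity is non-negative. -/

import Mathlib

/-! Summing `h(u)` over `λ` counts the pairs `(u, v)` with `v ∈ H(u)`. The cell `(i, j)` lies in
the diagonal hook of `(m, m)`, `m = min i j`, so the pairs inside one diagonal hook are best
counted by `v = (k, l)`: for `k ≤ l` they are the `(k, j)` with `k ≤ j ≤ l` (symmetrically for
`l ≤ k`), which are `|c(v)| + 1` many. Subtracting leaves the pairs across diagonal hooks. -/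

open Finset

/-- A Young diagram: a finite set of cells `(i, j)` with 1-based coordinates,
closed under decreasing either coordinate (down to 1).  Its rows are the
intervals `[1, λ_i]` for a weakly decreasing sequence `λ`. -/
def IsYoung (Y : Finset (ℕ × ℕ)) : Prop :=
  (∀ p ∈ Y, 1 ≤ p.1 ∧ 1 ≤ p.2) ∧
    ∀ p ∈ Y, ∀ q : ℕ × ℕ, 1 ≤ q.1 → 1 ≤ q.2 → q.1 ≤ p.1 → q.2 ≤ p.2 → q ∈ Y

/-- `row Y i = λ_i`, the length of the `i`-th row. -/
def row (Y : Finset (ℕ × ℕ)) (i : ℕ) : ℕ := (Y.filter fun p => p.1 = i).card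

/-- `col Y j = λ'_j`, the length of the `j`-th column (conjugate partition). -/
def col (Y : Finset (ℕ × ℕ)) (j : ℕ) : ℕ := (Y.filter fun p => p.2 = j).card

/-- Hook length `h(u) = λ_i + λ'_j - i - j + 1` of the cell `u = (i, j)`. -/
def hk (Y : Finset (ℕ × ℕ)) (u : ℕ × ℕ) : ℤ :=
  (row Y u.1 : ℤ) + (col Y u.2 : ℤ) - u.1 - u.2 + 1

/-- Content `c(u) = j - i` of the cell `u = (i, j)`. -/
def ct (u : ℕ × ℕ) : ℤ := (u.2 : ℤ) - (u.1 : ℤ)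

/-- The hook `H(u)` of a cell `u = (i, j)`: cells `(k, l) ∈ Y` with
`(k = i ∧ l ≥ j)` or `(l = j ∧ k ≥ i)`. -/
def hookSet (Y : Finset (ℕ × ℕ)) (u : ℕ × ℕ) : Finset (ℕ × ℕ) :=
  Y.filter fun v => (v.1 = u.1 ∧ u.2 ≤ v.2) ∨ (v.2 = u.2 ∧ u.1 ≤ v.1)

theorem Finset.eq_Icc_one_card_of_downClosed {s : Finset ℕ} (hpos : ∀ x ∈ s, 1 ≤ x)
    (hdown : ∀ x ∈ s, ∀ y, 1 ≤ y → y ≤ x → y ∈ s) : s = Icc 1 #s := by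
  obtain rfl | hne := s.eq_empty_or_nonempty
  · simp
  have hs : s = Icc 1 (s.max' hne) := by
    ext x
    refine ⟨fun hx => mem_Icc.2 ⟨hpos x hx, le_max' s x hx⟩, fun hx => ?_⟩
    rw [mem_Icc] at hx
    exact hdown _ (max'_mem s hne) x hx.1 hx.2
  rw [hs, Nat.card_Icc, Nat.add_sub_cancel]

theorem Finset.card_filter_product_eq_sum_left {α β : Type*} (s : Finset α) (t : Finset β)
    (p : α × β → Prop) [DecidablePred p] :
    #((s ×ˢ t).filter p) = ∑ a ∈ s, #(t.filter fun b => p (a, b)) := by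
  simp only [card_filter, sum_product]

theorem Finset.card_filter_product_eq_sum_right {α β : Type*} (s : Finset α) (t : Finset β)
    (p : α × β → Prop) [DecidablePred p] :
    #((s ×ˢ t).filter p) = ∑ b ∈ t, #(s.filter fun a => p (a, b)) := by
  simp only [card_filter, sum_product_right]

theorem hookSet_subset (Y : Finset (ℕ × ℕ)) (u : ℕ × ℕ) : hookSet Y u ⊆ Y :=
  filter_subset _ _

namespace IsYoung

variable {Y : Finset (ℕ × ℕ)}

theorem mem_iff_le_row (hY : IsYoung Y) (i l : ℕ) :
    (i, l) ∈ Y ↔ 1 ≤ l ∧ l ≤ row Y i := by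
  set s := (Y.filter (·.1 = i)).image Prod.snd
  have hmem : ∀ l, l ∈ s ↔ (i, l) ∈ Y := by simp [s]
  have hcard : #s = row Y i :=
    card_image_of_injOn fun p hp q hq h =>
      Prod.ext ((mem_filter.1 hp).2.trans (mem_filter.1 hq).2.symm) h
  have hs := eq_Icc_one_card_of_downClosed (s := s) (fun x hx => (hY.1 _ ((hmem x).1 hx)).2)
    fun x hx y hy hyx =>
      (hmem y).2 <| hY.2 _ ((hmem x).1 hx) _ (hY.1 _ ((hmem x).1 hx)).1 hy le_rfl hyx
  rw [← hmem, hs, hcard, mem_Icc]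

theorem mem_iff_le_col (hY : IsYoung Y) (k j : ℕ) :
    (k, j) ∈ Y ↔ 1 ≤ k ∧ k ≤ col Y j := by
  set s := (Y.filter (·.2 = j)).image Prod.fst
  have hmem : ∀ k, k ∈ s ↔ (k, j) ∈ Y := by simp [s]
  have hcard : #s = col Y j :=
    card_image_of_injOn fun p hp q hq h =>
      Prod.ext h ((mem_filter.1 hp).2.trans (mem_filter.1 hq).2.symm)
  have hs := eq_Icc_one_card_of_downClosed (s := s) (fun x hx => (hY.1 _ ((hmem x).1 hx)).1)
    fun x hx y hy hyx =>
      (hmem y).2 <| hY.2 _ ((hmem x).1 hx) _ hy (hY.1 _ ((hmem x).1 hx)).2 hyx le_rfl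
  rw [← hmem, hs, hcard, mem_Icc]

theorem hookSet_eq_arm_union_leg (hY : IsYoung Y) {i j : ℕ} (hu : (i, j) ∈ Y) :
    hookSet Y (i, j) =
      (Icc j (row Y i)).image (fun l => (i, l)) ∪ (Ioc i (col Y j)).image (fun k => (k, j)) := by
  have hj := (hY.mem_iff_le_row i j).1 hu
  have hi := (hY.mem_iff_le_col i j).1 hu
  ext ⟨a, b⟩
  simp only [hookSet, mem_filter, mem_union, mem_image, mem_Icc, mem_Ioc, Prod.mk.injEq]
  constructor
  · rintro ⟨hab, ⟨rfl, hjb⟩ | ⟨rfl, hia⟩⟩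
    · exact Or.inl ⟨b, ⟨hjb, ((hY.mem_iff_le_row a b).1 hab).2⟩, rfl, rfl⟩
    · obtain rfl | hia := hia.eq_or_lt
      · exact Or.inl ⟨b, ⟨le_rfl, hj.2⟩, rfl, rfl⟩
      · exact Or.inr ⟨a, ⟨hia, ((hY.mem_iff_le_col a b).1 hab).2⟩, rfl, rfl⟩
  · rintro (⟨l, ⟨hjl, hl⟩, rfl, rfl⟩ | ⟨k, ⟨hik, hk⟩, rfl, rfl⟩)
    · exact ⟨(hY.mem_iff_le_row _ _).2 ⟨hj.1.trans hjl, hl⟩, Or.inl ⟨rfl, hjl⟩⟩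
    · exact ⟨(hY.mem_iff_le_col _ _).2 ⟨hi.1.trans hik.le, hk⟩, Or.inr ⟨rfl, hik.le⟩⟩

theorem hk_eq_card_hookSet (hY : IsYoung Y) {u : ℕ × ℕ} (hu : u ∈ Y) :
    hk Y u = #(hookSet Y u) := by
  obtain ⟨i, j⟩ := u
  have hj := (hY.mem_iff_le_row i j).1 hu
  have hi := (hY.mem_iff_le_col i j).1 hu
  have hdisj : Disjoint ((Icc j (row Y i)).image (fun l => (i, l)))
      ((Ioc i (col Y j)).image (fun k => (k, j))) := by
    simp only [disjoint_left, mem_image, mem_Icc, mem_Ioc]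
    rintro _ ⟨l, -, rfl⟩ ⟨k, ⟨hik, -⟩, hkl⟩
    exact hik.ne' (Prod.ext_iff.1 hkl).1
  rw [hY.hookSet_eq_arm_union_leg hu, card_union_of_disjoint hdisj,
    card_image_of_injective _ (Prod.mk_right_injective i),
    card_image_of_injective _ (Prod.mk_left_injective j), Nat.card_Icc, Nat.card_Ioc, hk]
  push_cast
  omega

theorem card_filter_hookSet_mem_same_diagonal (hY : IsYoung Y) {k l : ℕ} (hv : (k, l) ∈ Y) :
    (#(Y.filter fun u => (k, l) ∈ hookSet Y u ∧ min k l = min u.1 u.2) : ℤ) =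
      |ct (k, l)| + 1 := by
  have hpos := hY.1 _ hv
  set A := Y.filter fun u => (k, l) ∈ hookSet Y u ∧ min k l = min u.1 u.2
  rcases le_total k l with hkl | hlk
  · have hA : A = (Icc k l).image (fun j => (k, j)) := by
      ext ⟨a, b⟩
      simp only [A, hookSet, mem_filter, hv, true_and, mem_image, mem_Icc, Prod.mk.injEq]
      constructor
      · rintro ⟨-, h⟩
        exact ⟨b, by omega, by omega, rfl⟩
      · rintro ⟨b, hb, rfl, rfl⟩
        exact ⟨hY.2 _ hv (k, b) hpos.1 (by omega) le_rfl hb.2, by omega⟩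
    rw [hA, card_image_of_injective _ (Prod.mk_right_injective k), Nat.card_Icc, ct,
      abs_of_nonneg (by omega)]
    omega
  · have hA : A = (Icc l k).image (fun i => (i, l)) := by
      ext ⟨a, b⟩
      simp only [A, hookSet, mem_filter, hv, true_and, mem_image, mem_Icc, Prod.mk.injEq]
      constructor
      · rintro ⟨-, h⟩
        exact ⟨a, by omega, rfl, by omega⟩
      · rintro ⟨a, ha, rfl, rfl⟩
        exact ⟨hY.2 _ hv (a, l) (by omega) hpos.2 ha.2 le_rfl, by omega⟩
    rw [hA, card_image_of_injective _ (Prod.mk_left_injective l), Nat.card_Icc, ct,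
      abs_of_nonpos (by omega)]
    omega

end IsYoung

theorem hook_sub_content_sub_n (n : ℕ) (Y : Finset (ℕ × ℕ)) (hY : IsYoung Y)
    (hcard : Y.card = n) :
    ((∑ u ∈ Y, hk Y u) - (∑ u ∈ Y, |ct u|) - n
        = (((Y ×ˢ Y).filter fun pq =>
            pq.2 ∈ hookSet Y pq.1 ∧ min pq.2.1 pq.2.2 ≠ min pq.1.1 pq.1.2).card : ℤ)) ∧
      (n : ℤ) + ∑ u ∈ Y, |ct u| ≤ ∑ u ∈ Y, hk Y u := by
  have hhooks : ∑ u ∈ Y, hk Y u = #((Y ×ˢ Y).filter fun pq => pq.2 ∈ hookSet Y pq.1) := by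
    rw [card_filter_product_eq_sum_left, Nat.cast_sum]
    refine sum_congr rfl fun u hu => ?_
    simp only [hY.hk_eq_card_hookSet hu, filter_mem_eq_inter,
      inter_eq_right.2 (hookSet_subset Y u)]
  have hsame : (n : ℤ) + ∑ u ∈ Y, |ct u| = #((Y ×ˢ Y).filter fun pq =>
      pq.2 ∈ hookSet Y pq.1 ∧ min pq.2.1 pq.2.2 = min pq.1.1 pq.1.2) := by
    rw [card_filter_product_eq_sum_right, Nat.cast_sum,
      sum_congr rfl fun v hv => hY.card_filter_hookSet_mem_same_diagonal hv, sum_add_distrib]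
    simp [hcard, add_comm]
  have hsplit := card_filter_add_card_filter_not
    (s := (Y ×ˢ Y).filter fun pq => pq.2 ∈ hookSet Y pq.1)
    (fun pq => min pq.2.1 pq.2.2 = min pq.1.1 pq.1.2)
  simp only [filter_filter, ← ne_eq] at hsplit
  constructor <;> omega
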